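/- arXiv:2111.12850 — 2 statements merged into one kernel-verified Lean document; each statement's English description precedes it below -/
import Mathlib

section
/- In the random-direction parking model, if α ∈ {1,...,n}^n is a permutation of (1,2,...,n), then the probability that α parks equals 1; otherwise the probability that α parks is strictly between 0 and 1. -/
/-- The first spot in the list `l` not in `occ`, if any. -/
def firstFree (occ : Finset ℕ) (l : List ℕ) : Option ℕ :=
  l.find? (fun s => decide (s ∉ occ))

/-- Run a parking simulation: each car is a pair (preference, coin); `step`
decides where a car parks (or `none` if it fails). Returns `true` iff all cars park. -/
def runPark (step : Finset ℕ → ℕ → Bool → Option ℕ) :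
    List (ℕ × Bool) → Finset ℕ → Bool
  | [], _ => true
  | (a, b) :: rest, occ =>
    match step occ a b with
    | none => false
    | some s => runPark step rest (insert s occ)

/-- Run a parking simulation, returning the final set of occupied spots
(cars that fail to park simply do not park). -/
def runOcc (step : Finset ℕ → ℕ → Bool → Option ℕ) :
    List (ℕ × Bool) → Finset ℕ → Finset ℕ
  | [], occ => occ
  | (a, b) :: rest, occ =>
    match step occ a b with
    | none => runOcc step rest occ
    | some s => runOcc step rest (insert s occ)

/-- Random-direction step on spots `1,…,n`: if the preferred spot `a` is free, take it;
otherwise if the coin says forward, take the first free spot among `a+1,…,n`;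
otherwise take the first free spot among `a-1,…,1`. -/
def dirStep (n : ℕ) (occ : Finset ℕ) (a : ℕ) (fwd : Bool) : Option ℕ :=
  if a ∉ occ then some a
  else if fwd then firstFree occ (List.range' (a + 1) (n - a))
  else firstFree occ ((List.range' 1 (a - 1)).reverse)

/-- Random `k`-Naples step on spots `1,…,n`: if the preferred spot `a` is free, take it;
otherwise, if the coin says to back up, check spots `a-1, a-2, …, max(a-k,1)` one by one
taking the first free one; if none (or if the coin says not to back up), take the first
free spot among `a+1,…,n`. -/
def naplesStep (n k : ℕ) (occ : Finset ℕ) (a : ℕ) (back : Bool) : Option ℕ :=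
  if a ∉ occ then some a
  else
    let fwd := firstFree occ (List.range' (a + 1) (n - a))
    if back then
      match firstFree occ ((List.range' (max (a - k) 1) (min k (a - 1))).reverse) with
      | some s => some s
      | none => fwd
    else fwd

/-- Circular random-direction step on spots `1,…,n+1` arranged in a circle:
if the preferred spot `a` is free, take it; otherwise search clockwise
(`a+1, a+2, …` wrapping around) or counterclockwise according to the coin. -/
def circStep (n : ℕ) (occ : Finset ℕ) (a : ℕ) (cw : Bool) : Option ℕ :=
  if a ∉ occ then some a
  else if cw then
    firstFree occ (List.range' (a + 1) (n + 1 - a) ++ List.range' 1 (a - 1))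
  else
    firstFree occ ((List.range' 1 (a - 1)).reverse ++ (List.range' (a + 1) (n + 1 - a)).reverse)

/-- Whether all `n` cars with preferences `α` park in the random-direction model on spots
`1,…,n` with coins `b` (`b i = true` means car `i` searches forward when its spot is taken). -/
def parksDir (n : ℕ) (α : Fin n → ℕ) (b : Fin n → Bool) : Bool :=
  runPark (dirStep n) (List.ofFn (fun i => (α i, b i))) ∅

/-- Whether all `n` cars with preferences `α` park in the `k`-Naples model on spots `1,…,n`
with coins `b` (`b i = true` means car `i` backs up when its spot is taken). -/
def parksNaples (n k : ℕ) (α : Fin n → ℕ) (b : Fin n → Bool) : Bool :=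
  runPark (naplesStep n k) (List.ofFn (fun i => (α i, b i))) ∅

/-- The probability that all cars park in the random-direction model, where each car
whose spot is taken independently searches forward with probability `p` and backward
with probability `1 - p`. -/
noncomputable def probDir (n : ℕ) (p : ℝ) (α : Fin n → ℕ) : ℝ :=
  ∑ b : Fin n → Bool,
    (∏ i, if b i then p else 1 - p) * (if parksDir n α b then 1 else 0)

/-- The probability that all cars park in the random `k`-Naples model, where each car
whose spot is taken independently backs up (up to) `k` spots with probability `p`. -/
noncomputable def probNaples (n k : ℕ) (p : ℝ) (α : Fin n → ℕ) : ℝ :=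
  ∑ b : Fin n → Bool,
    (∏ i, if b i then p else 1 - p) * (if parksNaples n k α b then 1 else 0)

/-- The deterministic 1-Naples simulation for choices `β = (β₂,…,βₙ) ∈ {0,1}^{n-1}`:
car `i ≥ 2` backs up one spot first iff `β i = false` (i.e. `βᵢ = 0`); car 1's choice
is irrelevant since its preferred spot is always free. -/
def parksUnder (n : ℕ) (α : Fin n → ℕ) (β : Fin (n - 1) → Bool) : Bool :=
  parksNaples n 1 α
    (fun i => if h : 0 < i.1 then !(β ⟨i.1 - 1, by have := i.2; omega⟩) else false)

/-- `g α`: the number of choice sequences `β ∈ {0,1}^{n-1}` under which `α` parks in the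
deterministic 1-Naples simulation. -/
def g (n : ℕ) (α : Fin n → ℕ) : ℕ :=
  (Finset.univ.filter (fun β : Fin (n - 1) → Bool => parksUnder n α β = true)).card

/-- `α` is a parking function: every car parks when each car whose preferred spot is taken
only searches forward. -/
def forwardParks (n : ℕ) (α : Fin n → ℕ) : Bool :=
  parksNaples n 0 α (fun _ => false)

/-- `α` is a 1-Naples parking function: every car parks when each car whose preferred spot
is taken always backs up one spot first. -/
def naplesParks (n : ℕ) (α : Fin n → ℕ) : Bool :=
  parksNaples n 1 α (fun _ => true)

/-- The expected number of random `k`-Naples parking functions on `n` cars. -/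
noncomputable def T (k : ℕ) (p : ℝ) (n : ℕ) : ℝ :=
  ∑ α : Fin n → Fin n, probNaples n k p (fun i => (α i).1 + 1)

/-- The staircase preference list: `m t` copies of `t`, then `m (t-1)` copies of `t-1`,
…, down to `m 2` copies of `2`. -/
def stair (t : ℕ) (m : ℕ → ℕ) : List ℕ :=
  ((List.range' 2 (t - 1)).reverse).flatMap (fun j => List.replicate (m j) j)

/-- The staircase condition on a preference tuple: `α₁ = α₂`, each entry decreases by
`0` or `1`, and `αₙ = 2`. -/
def Staircase {n : ℕ} (hn : 2 ≤ n) (α : Fin n → ℕ) : Prop :=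
  α ⟨0, by omega⟩ = α ⟨1, by omega⟩ ∧
  (∀ i : ℕ, (h : i + 1 < n) →
    α ⟨i + 1, h⟩ = α ⟨i, by omega⟩ ∨ α ⟨i + 1, h⟩ + 1 = α ⟨i, by omega⟩) ∧
  α ⟨n - 1, by omega⟩ = 2

/-- The number of 1-Naples parking functions on `n` cars. -/
def Nnum (n : ℕ) : ℕ :=
  (Finset.univ.filter
    (fun α : Fin n → Fin n => naplesParks n (fun i => (α i).1 + 1) = true)).card


/-!
If the preferences are distinct, every car finds its preferred spot free, whatever the coins.
Otherwise, some coin sequence parks everybody: a car whose spot is taken can always turn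
towards a free spot, and one exists as long as not all cars have parked. Some coin sequence
fails as well: if both the all-forward and the all-backward runs parked everybody, the spots
taken would be permutations `σ, τ` of `1, …, n` with `τ i ≤ α i ≤ σ i`; comparing sums forces
`α = σ`, so the preferences would be distinct. Since every coin sequence has positive weight,
the probability lies strictly between `0` and `1`.
-/

open Finset

lemma firstFree_eq_some {occ : Finset ℕ} {l : List ℕ} {s : ℕ}
    (h : firstFree occ l = some s) : s ∈ l ∧ s ∉ occ :=
  ⟨List.mem_of_find?_eq_some h, by simpa using List.find?_some h⟩

lemma exists_firstFree_eq_some {occ : Finset ℕ} {l : List ℕ} {s : ℕ}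
    (hs : s ∈ l) (hocc : s ∉ occ) : ∃ t, firstFree occ l = some t := by
  rw [← Option.isSome_iff_exists, Option.isSome_iff_ne_none, Ne, firstFree,
    List.find?_eq_none]
  exact fun h => h s hs (by simpa using hocc)

section DirStep

variable {n : ℕ} {occ : Finset ℕ} {a s : ℕ} {b : Bool}

/-- Where a car preferring `a` with coin `b` can end up: within `1, …, n` if `a` is, and on the
side of `a` the coin points to. -/
def DirSpot (n a : ℕ) (b : Bool) (s : ℕ) : Prop :=
  (a ∈ Icc 1 n → s ∈ Icc 1 n) ∧ (b = true → a ≤ s) ∧ (b = false → s ≤ a)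

lemma dirStep_of_notMem (b : Bool) (h : a ∉ occ) : dirStep n occ a b = some a := by
  simp [dirStep, h]

lemma dirStep_spec (h : dirStep n occ a b = some s) : s ∉ occ ∧ DirSpot n a b s := by
  by_cases ha : a ∈ occ
  · cases b <;> simp only [dirStep, ha, not_true_eq_false, if_false, Bool.false_eq_true,
      if_true] at h
    · obtain ⟨hmem, hs⟩ := firstFree_eq_some h
      rw [List.mem_reverse, List.mem_range'_1] at hmem
      exact ⟨hs, fun h => by simp only [mem_Icc] at h ⊢; omega, by simp, fun _ => by omega⟩
    · obtain ⟨hmem, hs⟩ := firstFree_eq_some h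
      rw [List.mem_range'_1] at hmem
      exact ⟨hs, fun h => by simp only [mem_Icc] at h ⊢; omega, fun _ => by omega, by simp⟩
  · obtain rfl : a = s := Option.some_injective _ ((dirStep_of_notMem b ha).symm.trans h)
    exact ⟨ha, id, fun _ => le_rfl, fun _ => le_rfl⟩

lemma exists_dirStep_eq_some (ha : a ∈ Icc 1 n) (hcard : occ.card < n) :
    ∃ b s, dirStep n occ a b = some s := by
  by_cases hao : a ∈ occ
  · obtain ⟨t, htI, hto⟩ : ∃ t ∈ Icc 1 n, t ∉ occ := by
      by_contra! h
      have := card_le_card h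
      simp only [Nat.card_Icc, add_tsub_cancel_right] at this
      omega
    have hta : t ≠ a := fun h => hto (h ▸ hao)
    rw [mem_Icc] at ha htI
    rcases hta.lt_or_gt with hlt | hgt
    · have hmem : t ∈ (List.range' 1 (a - 1)).reverse := by
        rw [List.mem_reverse, List.mem_range'_1]; omega
      exact ⟨false, by simpa [dirStep, hao] using exists_firstFree_eq_some hmem hto⟩
    · have hmem : t ∈ List.range' (a + 1) (n - a) := by
        rw [List.mem_range'_1]; omega
      exact ⟨true, by simpa [dirStep, hao] using exists_firstFree_eq_some hmem hto⟩
  · exact ⟨true, a, dirStep_of_notMem true hao⟩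

end DirStep

lemma runPark_exists_spots {step : Finset ℕ → ℕ → Bool → Option ℕ}
    {R : ℕ → Bool → ℕ → Prop}
    (hstep : ∀ occ a b s, step occ a b = some s → s ∉ occ ∧ R a b s) :
    ∀ (l : List (ℕ × Bool)) (occ : Finset ℕ), runPark step l occ = true →
      ∃ ss : List ℕ, List.Forall₂ (fun x s => R x.1 x.2 s) l ss ∧ ss.Nodup ∧
        ∀ s ∈ ss, s ∉ occ
  | [], _, _ => ⟨[], .nil, List.nodup_nil, by simp⟩
  | (a, b) :: rest, occ, hrun => by
    rw [runPark] at hrun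
    cases hs : step occ a b with
    | none => simp [hs] at hrun
    | some s =>
      rw [hs] at hrun
      obtain ⟨hso, hR⟩ := hstep occ a b s hs
      obtain ⟨ss, hrel, hnd, hfree⟩ := runPark_exists_spots hstep rest (insert s occ) hrun
      refine ⟨s :: ss, .cons hR hrel, List.nodup_cons.2 ⟨fun h => ?_, hnd⟩, ?_⟩
      · exact hfree s h (mem_insert_self s occ)
      · simp only [List.mem_cons, forall_eq_or_imp]
        exact ⟨hso, fun t ht hto => hfree t ht (mem_insert_of_mem hto)⟩

lemma runPark_dirStep_of_nodup (n : ℕ) :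
    ∀ (l : List (ℕ × Bool)) (occ : Finset ℕ),
      (l.map Prod.fst).Nodup → (∀ x ∈ l, x.1 ∉ occ) → runPark (dirStep n) l occ = true
  | [], _, _, _ => rfl
  | (a, b) :: rest, occ, hnd, hfree => by
    rw [runPark, dirStep_of_notMem b (hfree (a, b) List.mem_cons_self)]
    simp only [List.map_cons, List.nodup_cons] at hnd
    refine runPark_dirStep_of_nodup n rest (insert a occ) hnd.2 fun x hx => ?_
    rw [mem_insert, not_or]
    exact ⟨fun h => hnd.1 (h ▸ List.mem_map_of_mem hx), hfree x (List.mem_cons_of_mem _ hx)⟩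

lemma exists_runPark_dirStep (n : ℕ) :
    ∀ (l : List ℕ) (occ : Finset ℕ), (∀ a ∈ l, a ∈ Icc 1 n) →
      occ.card + l.length ≤ n →
      ∃ bs : List Bool, bs.length = l.length ∧ runPark (dirStep n) (l.zip bs) occ = true
  | [], _, _, _ => ⟨[], rfl, rfl⟩
  | a :: l, occ, hl, hcard => by
    rw [List.length_cons] at hcard
    obtain ⟨b, s, hs⟩ :=
      exists_dirStep_eq_some (occ := occ) (hl a List.mem_cons_self) (by omega)
    obtain ⟨hso, -⟩ := dirStep_spec hs
    obtain ⟨bs, hlen, hrun⟩ := exists_runPark_dirStep n l (insert s occ)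
      (fun x hx => hl x (List.mem_cons_of_mem _ hx))
      (by rw [card_insert_of_notMem hso]; omega)
    exact ⟨b :: bs, by simp [hlen], by rwa [List.zip_cons_cons, runPark, hs]⟩

section ParksDir

variable {n : ℕ} {α : Fin n → ℕ}

lemma exists_injective_dirSpot_of_parksDir {b : Fin n → Bool} (h : parksDir n α b = true) :
    ∃ σ : Fin n → ℕ, Function.Injective σ ∧ ∀ i, DirSpot n (α i) (b i) (σ i) := by
  obtain ⟨ss, hrel, hnd, -⟩ :=
    runPark_exists_spots (R := DirSpot n) (fun _ _ _ _ => dirStep_spec) _ _ h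
  obtain ⟨hlen, hR⟩ := List.forall₂_iff_get.1 hrel
  rw [List.length_ofFn] at hlen
  refine ⟨fun i => ss[i.1], fun i j hij => Fin.ext ((hnd.getElem_inj_iff).1 hij), fun i => ?_⟩
  simpa using hR i (by simp) (by omega)

lemma sum_eq_sum_Icc_of_injective {σ : Fin n → ℕ} (hσ : Function.Injective σ)
    (hI : ∀ i, σ i ∈ Icc 1 n) : ∑ i, σ i = ∑ s ∈ Icc 1 n, s := by
  have himage : univ.image σ = Icc 1 n := by
    refine eq_of_subset_of_card_le (by simpa [subset_iff] using hI) ?_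
    rw [card_image_of_injective _ hσ]
    simp
  rw [← himage, sum_image hσ.injOn]

lemma injective_of_parksDir_forward_backward (hα : ∀ i, α i ∈ Icc 1 n)
    (hfwd : parksDir n α (fun _ => true) = true)
    (hbwd : parksDir n α (fun _ => false) = true) : Function.Injective α := by
  obtain ⟨σ, hσ, hσα⟩ := exists_injective_dirSpot_of_parksDir hfwd
  obtain ⟨τ, hτ, hτα⟩ := exists_injective_dirSpot_of_parksDir hbwd
  have hασ : ∀ i ∈ univ, α i ≤ σ i := fun i _ => (hσα i).2.1 rfl
  have hsum : ∑ i, σ i ≤ ∑ i, α i := calc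
    ∑ i, σ i = ∑ i, τ i := by
      rw [sum_eq_sum_Icc_of_injective hσ fun i => (hσα i).1 (hα i),
        sum_eq_sum_Icc_of_injective hτ fun i => (hτα i).1 (hα i)]
    _ ≤ ∑ i, α i := sum_le_sum fun i _ => (hτα i).2.2 rfl
  have hEq : α = σ := funext fun i =>
    (sum_eq_sum_iff_of_le hασ).1 ((sum_le_sum hασ).antisymm hsum) i (mem_univ i)
  exact hEq ▸ hσ

lemma parksDir_of_injective (hα : Function.Injective α) (b : Fin n → Bool) :
    parksDir n α b = true := by
  refine runPark_dirStep_of_nodup n _ _ ?_ (by simp)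
  simpa [List.map_ofFn, Function.comp_def, List.nodup_ofFn] using hα

lemma exists_parksDir (hα : ∀ i, α i ∈ Icc 1 n) : ∃ b, parksDir n α b = true := by
  obtain ⟨bs, hlen, hrun⟩ := exists_runPark_dirStep n (List.ofFn α) ∅
    (by simpa [List.mem_ofFn] using hα) (by simp)
  rw [List.length_ofFn] at hlen
  refine ⟨fun i => bs[i.1], ?_⟩
  have hzip : List.ofFn (fun i : Fin n => (α i, bs[i.1])) = (List.ofFn α).zip bs :=
    List.ext_getElem (by simp [hlen]) fun m _ _ => by simp
  rw [parksDir, hzip]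
  exact hrun

end ParksDir

section ProbDir

variable {n : ℕ} {p : ℝ} {α : Fin n → ℕ}

lemma coinWeight_pos (hp0 : 0 < p) (hp1 : p < 1) (b : Fin n → Bool) :
    0 < ∏ i, if b i then p else 1 - p :=
  prod_pos fun i _ => by split <;> linarith

lemma sum_coinWeight (p : ℝ) : ∑ b : Fin n → Bool, (∏ i, if b i then p else 1 - p) = 1 := by
  rw [← Fintype.prod_sum (fun (_ : Fin n) (t : Bool) => if t then p else 1 - p)]
  simp

lemma probDir_eq_one (h : ∀ b, parksDir n α b = true) : probDir n p α = 1 := by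
  simp only [probDir, h, if_true, mul_one]
  exact sum_coinWeight p

lemma probDir_pos (hp0 : 0 < p) (hp1 : p < 1) (h : ∃ b, parksDir n α b = true) :
    0 < probDir n p α := by
  obtain ⟨b₀, hb₀⟩ := h
  refine sum_pos' (fun b _ => ?_)
    ⟨b₀, mem_univ _, by simpa [hb₀] using coinWeight_pos hp0 hp1 b₀⟩
  exact mul_nonneg (coinWeight_pos hp0 hp1 b).le (by split <;> norm_num)

lemma probDir_lt_one (hp0 : 0 < p) (hp1 : p < 1) (h : ∃ b, parksDir n α b = false) :
    probDir n p α < 1 := by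
  obtain ⟨b₀, hb₀⟩ := h
  rw [← sum_coinWeight (n := n) p, probDir]
  refine sum_lt_sum (fun b _ => ?_)
    ⟨b₀, mem_univ _, by simpa [hb₀] using coinWeight_pos hp0 hp1 b₀⟩
  exact mul_le_of_le_one_right (coinWeight_pos hp0 hp1 b).le (by split <;> norm_num)

end ProbDir

theorem stmt1_general (n : ℕ) (p : ℝ) (hp0 : 0 < p) (hp1 : p < 1)
    (α : Fin n → Fin n) :
    (Function.Bijective α → probDir n p (fun i => (α i).1 + 1) = 1) ∧
    (¬ Function.Bijective α →
      0 < probDir n p (fun i => (α i).1 + 1) ∧ probDir n p (fun i => (α i).1 + 1) < 1) := by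
  have hpref : ∀ i, (α i).1 + 1 ∈ Icc 1 n := fun i => mem_Icc.2 ⟨by omega, (α i).2⟩
  have hinj : Function.Injective (fun i => (α i).1 + 1) ↔ Function.Injective α :=
    ⟨fun h i j hij => h (by simp [hij]), fun h i j hij => h (Fin.ext (by simpa using hij))⟩
  refine ⟨fun hbij => probDir_eq_one (parksDir_of_injective (hinj.2 hbij.1)),
    fun hnb => ⟨probDir_pos hp0 hp1 (exists_parksDir hpref), probDir_lt_one hp0 hp1 ?_⟩⟩
  by_contra! hall
  simp only [ne_eq, Bool.not_eq_false] at hall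
  exact hnb (Finite.injective_iff_bijective.1
    (hinj.1 (injective_of_parksDir_forward_backward hpref (hall _) (hall _))))

/-- In the random-direction model with `p ∈ (0,1)`, a permutation parks with probability 1,
and any non-permutation parks with probability strictly between 0 and 1. -/
theorem stmt1 (n : ℕ) (hn : 0 < n) (p : ℝ) (hp0 : 0 < p) (hp1 : p < 1)
    (α : Fin n → Fin n) :
    (Function.Bijective α → probDir n p (fun i => (α i).1 + 1) = 1) ∧
    (¬ Function.Bijective α →
      0 < probDir n p (fun i => (α i).1 + 1) ∧ probDir n p (fun i => (α i).1 + 1) < 1) :=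
  stmt1_general n p hp0 hp1 α
end

section
/- For n ≥ 2 and every integer t with 1 ≤ t ≤ 2^{n−2}, there exists exactly one α ∈ {1,...,n}^n such that the probability that α parks in the random 1-Naples model with p = 1/2 equals (2t−1)/2^{n−1}. -/
/-!
With `p = 1/2` every coin vector has weight `2⁻ⁿ`, so the probability is `c / 2ⁿ`, where `c`
counts the coin vectors under which all cars park. A car whose coin does not change where it
parks contributes a factor 2 to `c`. The first car always parks at `α₁`, so `c / 2` is odd only
if the coin of every later car matters. Then the occupied spots always form an interval
`[l, r]`, the next car prefers `l`, and backing up or moving forward turns the interval into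
`[l - 1, r]` or `[l, r + 1]`; as the last car can only back up into spot 1, `α` is a staircase
`α₁ = α₂ ≥ α₃ ≥ ⋯ ≥ αₙ = 2` with steps 0 or 1. Reading the drop `αᵢ₊₂ - αᵢ₊₃` as bit `i` of
`X < 2ⁿ⁻²`, a recursion over the three possible positions of a preference relative to `[l, r]`
gives `c = 2ⁿ - 4X - 2`, so the staircase with `X = 2ⁿ⁻² - t` is the unique `α`.
-/

open Finset

def popcount (X : ℕ) : ℕ := X.bitIndices.length

theorem popcount_eq_mod_two_add_div_two (X : ℕ) : popcount X = X % 2 + popcount (X / 2) := by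
  obtain ⟨k, rfl | rfl⟩ := Nat.even_or_odd' X
  · simp [popcount]
  · rw [show (2 * k + 1) / 2 = k by omega]
    simp [popcount, Nat.add_comm 1]

theorem popcount_le {k X : ℕ} (hX : X < 2 ^ k) : popcount X ≤ k := by
  induction k generalizing X with
  | zero => simp [Nat.lt_one_iff.1 hX, popcount]
  | succ k ih =>
    have := ih (X := X / 2) (by omega)
    rw [popcount_eq_mod_two_add_div_two]
    omega

theorem add_one_eq_two_pow_of_popcount_eq {k X : ℕ} (hX : X < 2 ^ k) (hpc : popcount X = k) :
    X + 1 = 2 ^ k := by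
  induction k generalizing X with
  | zero => omega
  | succ k ih =>
    rw [popcount_eq_mod_two_add_div_two] at hpc
    have := popcount_le (X := X / 2) (k := k) (by omega)
    have := ih (X := X / 2) (by omega) (by omega)
    rw [pow_succ]
    omega

theorem popcount_two_mul (X : ℕ) : popcount (2 * X) = popcount X := by
  simp [popcount]

section ParkCount

variable (step : Finset ℕ → ℕ → Bool → Option ℕ)

def parkCount : List ℕ → Finset ℕ → ℕ
  | [], _ => 1
  | a :: as, occ =>
    (step occ a true).elim 0 (fun s => parkCount as (insert s occ)) +
    (step occ a false).elim 0 (fun s => parkCount as (insert s occ))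

theorem sum_runPark_ofFn {m : ℕ} (f : Fin m → ℕ) (occ : Finset ℕ) :
    ∑ b : Fin m → Bool, (if runPark step (List.ofFn fun i => (f i, b i)) occ then 1 else 0) =
      parkCount step (List.ofFn f) occ := by
  induction m generalizing occ with
  | zero => simp [runPark, parkCount]
  | succ m ih =>
    have hfirst : ∀ b₀, (∑ b : Fin m → Bool, if runPark step
        ((f 0, b₀) :: List.ofFn fun i => (f i.succ, b i)) occ then 1 else 0) =
        (step occ (f 0) b₀).elim 0 fun s => parkCount step (List.ofFn fun i => f i.succ)
          (insert s occ) := by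
      intro b₀
      cases h : step occ (f 0) b₀ <;> simp [runPark, h, ← ih]
    rw [← (Fin.consEquiv fun _ => Bool).sum_comp, Fintype.sum_prod_type, Fintype.sum_bool,
      List.ofFn_succ, parkCount, ← hfirst, ← hfirst]
    simp [Fin.consEquiv]

variable {step} in
theorem parkCount_cons_of_step_eq {a : ℕ} {as : List ℕ} {occ : Finset ℕ}
    (h : step occ a true = step occ a false) :
    parkCount step (a :: as) occ =
      2 * (step occ a false).elim 0 fun s => parkCount step as (insert s occ) := by
  rw [parkCount, h, two_mul]

end ParkCount

theorem probNaples_half (n k : ℕ) (α : Fin n → ℕ) :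
    probNaples n k (1 / 2) α = parkCount (naplesStep n k) (List.ofFn α) ∅ / 2 ^ n := by
  have hweight : ∀ b : Fin n → Bool,
      (∏ i, if b i then (1 / 2 : ℝ) else 1 - 1 / 2) = (2 ^ n)⁻¹ := by
    intro b
    norm_num
  simp only [probNaples, parksNaples, hweight, ← Finset.mul_sum, ← sum_runPark_ofFn]
  push_cast
  rw [div_eq_inv_mul]
  congr

theorem naplesStep_of_notMem {n k a : ℕ} {occ : Finset ℕ} (ha : a ∉ occ) (b : Bool) :
    naplesStep n k occ a b = some a := by
  simp [naplesStep, ha]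

theorem firstFree_Icc_range' {n l r a : ℕ} (hla : l ≤ a) (har : a ≤ r) (hrn : r ≤ n) :
    firstFree (Icc l r) (List.range' (a + 1) (n - a)) = if r < n then some (r + 1) else none := by
  rw [show n - a = (r - a) + (n - r) by omega, ← List.range'_append,
    show a + 1 + 1 * (r - a) = r + 1 by omega, firstFree, List.find?_append,
    List.find?_eq_none.2 (by simp; omega)]
  rcases Nat.lt_or_ge r n with h | h
  · rw [show n - r = (n - r - 1) + 1 by omega, List.range'_succ]
    simp [h]
  · simp [show n - r = 0 by omega, show ¬ r < n by omega]

theorem naplesStep_one_Icc {n l r a : ℕ} (b : Bool) (hla : l ≤ a) (har : a ≤ r)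
    (hrn : r ≤ n) :
    naplesStep n 1 (Icc l r) a b =
      if b = true ∧ a = l ∧ 2 ≤ l then some (l - 1)
      else if r < n then some (r + 1) else none := by
  have hmem : a ∈ Icc l r := mem_Icc.2 ⟨hla, har⟩
  have hback : firstFree (Icc l r) (List.range' (max (a - 1) 1) (min 1 (a - 1))).reverse =
      if a = l ∧ 2 ≤ l then some (l - 1) else none := by
    rcases Nat.lt_or_ge a 2 with ha | ha
    · simp [show a - 1 = 0 by omega, firstFree]
      omega
    · rw [show max (a - 1) 1 = a - 1 by omega, show min 1 (a - 1) = 1 by omega]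
      simp only [firstFree, List.range'_one, List.reverse_singleton, List.find?_singleton, mem_Icc,
        decide_eq_true_eq]
      split_ifs <;> first | rfl | omega | (congr 1; omega)
  simp only [naplesStep, hmem, not_true_eq_false, if_false, firstFree_Icc_range' hla har hrn, hback]
  cases b <;> split_ifs <;> simp_all

theorem parkCount_naples_cons_of_notMem {n k a : ℕ} {as : List ℕ} {occ : Finset ℕ}
    (ha : a ∉ occ) :
    parkCount (naplesStep n k) (a :: as) occ =
      2 * parkCount (naplesStep n k) as (insert a occ) := by
  rw [parkCount_cons_of_step_eq (by rw [naplesStep_of_notMem ha, naplesStep_of_notMem ha]),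
    naplesStep_of_notMem ha]
  rfl

section Interval

variable {n l r : ℕ} {as : List ℕ}

local notation "C" => parkCount (naplesStep n 1)

theorem parkCount_cons_Icc_left (hl : 2 ≤ l) (hlr : l ≤ r) (hrn : r ≤ n) :
    C (l :: as) (Icc l r) = C as (Icc (l - 1) r) + if r < n then C as (Icc l (r + 1)) else 0 := by
  simp only [parkCount, naplesStep_one_Icc _ le_rfl hlr hrn, hl, and_self,
    Bool.false_eq_true, false_and, if_true, if_false]
  split_ifs <;> simp [insert_Icc_left_eq_Icc_sub_one (show l - 1 ≤ r by omega),
    insert_Icc_right_eq_Icc_add_one (show l ≤ r + 1 by omega)]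

theorem parkCount_cons_Icc_of_lt {a : ℕ} (hla : l < a) (har : a ≤ r + 1) (hrn : r < n) :
    C (a :: as) (Icc l r) = 2 * C as (Icc l (r + 1)) := by
  rw [← insert_Icc_right_eq_Icc_add_one (by omega : l ≤ r + 1)]
  rcases Nat.lt_or_ge r a with hra | hra
  · rw [show a = r + 1 by omega]
    exact parkCount_naples_cons_of_notMem (by simp)
  · rw [parkCount_cons_of_step_eq (by simp [naplesStep_one_Icc, hla.le, hra, hrn.le, hla.ne']),
      naplesStep_one_Icc _ hla.le hra hrn.le]
    simp [hrn]

theorem two_dvd_parkCount_cons_Icc {a : ℕ} (h : ¬(a = l ∧ 2 ≤ l ∧ l ≤ r))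
    (hrn : r ≤ n) :
    2 ∣ C (a :: as) (Icc l r) := by
  by_cases ha : a ∈ Icc l r
  · rw [mem_Icc] at ha
    rw [parkCount_cons_of_step_eq (by simp [naplesStep_one_Icc, ha.1, ha.2, hrn]; omega)]
    exact dvd_mul_right 2 _
  · rw [parkCount_naples_cons_of_notMem ha]
    exact dvd_mul_right 2 _

end Interval

/-- Entry `j` is `2 + popcount (X / 2 ^ j)`: bit `j` of `X` is the drop from entry `j` to entry
`j + 1`, and the last entry is `2` when `2 * X < 2 ^ m`. -/
def bitStair : ℕ → ℕ → List ℕ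
  | 0, _ => []
  | m + 1, X => (2 + popcount X) :: bitStair m (X / 2)

theorem bitStair_succ_two_mul_add {m X d : ℕ} (hd : d < 2) :
    bitStair (m + 1) (2 * X + d) = (2 + popcount X + d) :: bitStair m X := by
  rw [bitStair, popcount_eq_mod_two_add_div_two, show (2 * X + d) / 2 = X by omega,
    show (2 * X + d) % 2 = d by omega]
  ring_nf

theorem bitStair_succ_two_mul (m X : ℕ) :
    bitStair (m + 1) (2 * X) = (2 + popcount X) :: bitStair m X := by
  simpa using bitStair_succ_two_mul_add (m := m) (X := X) (d := 0) (by omega)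

@[simp]
theorem length_bitStair (m X : ℕ) : (bitStair m X).length = m := by
  induction m generalizing X <;> simp [bitStair, *]

theorem mem_bitStair_bounds {m X a : ℕ} (ha : a ∈ bitStair m X) :
    2 ≤ a ∧ a ≤ 2 + popcount X := by
  induction m generalizing X with
  | zero => simp [bitStair] at ha
  | succ m ih =>
    rw [bitStair, List.mem_cons] at ha
    have := popcount_eq_mod_two_add_div_two X
    rcases ha with rfl | ha
    · omega
    · have := ih ha
      omega

/-- `hcap` says that the cars exactly fill the free spots, and `hl`, `hl'` that the first
preference `2 + popcount X` lies in `[l - 1, l + 1]`. -/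
theorem parkCount_bitStair {n m X l r : ℕ} (hX : 2 * X < 2 ^ m) (hlr : l ≤ r) (hrn : r ≤ n)
    (hcap : r + m + 1 = l + n) (hl : popcount X + 1 ≤ l) (hl' : l ≤ popcount X + 3) :
    parkCount (naplesStep n 1) (bitStair m X) (Icc l r) + 2 * X + l = 2 ^ m + popcount X + 1 := by
  induction m generalizing X l r with
  | zero =>
    obtain rfl : X = 0 := by omega
    simp [bitStair, parkCount, popcount]
    omega
  | succ m ih =>
    rw [pow_succ] at hX ⊢
    have hpc := popcount_eq_mod_two_add_div_two X
    have hpc_le : popcount X ≤ m := popcount_le (by omega)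
    have hX' : 2 * (X / 2) < 2 ^ m := by omega
    rw [bitStair]
    rcases (by omega : l = popcount X + 3 ∨ l = popcount X + 2 ∨ l = popcount X + 1)
      with hl_eq | hl_eq | hl_eq
    · rw [parkCount_naples_cons_of_notMem (by simp; omega), show 2 + popcount X = l - 1 by omega,
        insert_Icc_left_eq_Icc_sub_one (by omega)]
      have := ih hX' (l := l - 1) (r := r) (by omega) hrn (by omega) (by omega) (by omega)
      omega
    · rw [show 2 + popcount X = l by omega, parkCount_cons_Icc_left (by omega) hlr hrn]
      have hback := ih hX' (l := l - 1) (r := r) (by omega) hrn (by omega) (by omega) (by omega)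
      split_ifs with hr
      · have hfwd := ih hX' (l := l) (r := r + 1) (by omega) hr (by omega) (by omega) (by omega)
        omega
      · have := add_one_eq_two_pow_of_popcount_eq (k := m) (X := X) (by omega) (by omega)
        omega
    · rw [parkCount_cons_Icc_of_lt (by omega) (by omega) (by omega)]
      have := ih hX' (l := l) (r := r + 1) (by omega) (by omega) (by omega) (by omega) (by omega)
      omega

theorem exists_eq_bitStair_of_odd {n : ℕ} {as : List ℕ} (hne : as ≠ []) {l r : ℕ}
    (hrn : r ≤ n) (hcap : r + as.length + 1 = l + n)
    (hodd : parkCount (naplesStep n 1) as (Icc l r) % 2 = 1) :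
    ∃ X, 2 * X < 2 ^ as.length ∧ l = 2 + popcount X ∧ as = bitStair as.length X := by
  induction as generalizing l r with
  | nil => exact absurd rfl hne
  | cons a as ih =>
    obtain ⟨ha, hl, hlr⟩ : a = l ∧ 2 ≤ l ∧ l ≤ r := by
      by_contra h
      have := two_dvd_parkCount_cons_Icc (as := as) h hrn
      omega
    subst a
    rw [parkCount_cons_Icc_left hl hlr hrn] at hodd
    rcases eq_or_ne as [] with rfl | has
    · have hr : ¬r < n := fun hr => by simp [hr, parkCount] at hodd
      obtain rfl : l = 2 := by simp only [List.length_singleton] at hcap; omega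
      exact ⟨0, by simp, by simp [popcount], by simp [bitStair, popcount]⟩
    simp only [List.length_cons] at hcap ⊢
    have hstep : ∀ d < 2, ∀ X, 2 * X < 2 ^ as.length → l = 2 + popcount X + d →
        as = bitStair as.length X → ∃ X, 2 * X < 2 ^ (as.length + 1) ∧ l = 2 + popcount X ∧
          l :: as = bitStair (as.length + 1) X := by
      intro d hd X hX hl hX'
      have : 2 ∣ 2 ^ as.length := dvd_pow_self 2 (by simpa using has)
      refine ⟨2 * X + d, by rw [pow_succ]; omega, ?_, ?_⟩
      · rw [popcount_eq_mod_two_add_div_two, show (2 * X + d) / 2 = X by omega]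
        omega
      · rw [bitStair_succ_two_mul_add hd, ← hl, ← hX']
    rcases Nat.mod_two_eq_zero_or_one (parkCount (naplesStep n 1) as (Icc (l - 1) r)) with hb | hb
    · split_ifs at hodd with hr
      · obtain ⟨X, hX, hlX, has_eq⟩ := ih has (l := l) (r := r + 1) hr (by omega) (by omega)
        exact hstep 0 (by omega) X hX (by omega) has_eq
      · omega
    · obtain ⟨X, hX, hlX, has_eq⟩ := ih has (l := l - 1) (r := r) hrn (by omega) hb
      exact hstep 1 (by omega) X hX (by omega) has_eq

theorem parkCount_bitStair_two_mul {n X : ℕ} (hn : 2 ≤ n) (hX : 4 * X < 2 ^ n) :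
    parkCount (naplesStep n 1) (bitStair n (2 * X)) ∅ + 4 * X + 2 = 2 ^ n := by
  obtain ⟨m, rfl⟩ : ∃ m, n = m + 2 := ⟨n - 2, by omega⟩
  rw [bitStair_succ_two_mul, parkCount_naples_cons_of_notMem (notMem_empty _), insert_empty_eq,
    ← Icc_self]
  simp only [pow_succ] at hX ⊢
  have := popcount_le (k := m) (X := X) (by omega)
  have := parkCount_bitStair (n := m + 2) (m := m + 1) (X := X) (l := 2 + popcount X)
    (r := 2 + popcount X) (by rw [pow_succ]; omega) le_rfl (by omega) (by omega) (by omega)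
    (by omega)
  rw [pow_succ] at this
  omega

theorem parkCount_add_eq_two_pow_iff {n X : ℕ} (hn : 2 ≤ n) (hX : 4 * X < 2 ^ n) {L : List ℕ}
    (hlen : L.length = n) (hL : ∀ a ∈ L, a ≤ n) :
    parkCount (naplesStep n 1) L ∅ + 4 * X + 2 = 2 ^ n ↔ L = bitStair n (2 * X) := by
  refine ⟨fun h => ?_, fun h => h ▸ parkCount_bitStair_two_mul hn hX⟩
  obtain ⟨a, as, rfl⟩ :=
    List.exists_cons_of_ne_nil (List.ne_nil_of_length_pos (by omega : 0 < L.length))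
  simp only [List.length_cons] at hlen
  have hodd : parkCount (naplesStep n 1) as (Icc a a) % 2 = 1 := by
    have h4 : 2 ^ 2 ∣ 2 ^ n := pow_dvd_pow 2 hn
    rw [parkCount_naples_cons_of_notMem (notMem_empty a), insert_empty_eq, ← Icc_self] at h
    omega
  obtain ⟨Y, hY, rfl, has⟩ := exists_eq_bitStair_of_odd
    (List.ne_nil_of_length_pos (by omega)) (r := a) (hL a (by simp)) (by omega) hodd
  have hstair : (2 + popcount Y) :: as = bitStair n (2 * Y) := by
    rw [← hlen, bitStair_succ_two_mul, ← has]
  have := parkCount_bitStair_two_mul hn (X := Y) (by rw [← hlen, pow_succ]; omega)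
  rw [hstair] at h ⊢
  rw [show X = Y by omega]

theorem exists_ofFn_fin_add_one_eq {n : ℕ} {L : List ℕ} (hlen : L.length = n)
    (hL : ∀ a ∈ L, 1 ≤ a ∧ a ≤ n) :
    ∃ α : Fin n → Fin n, List.ofFn (fun i => (α i : ℕ) + 1) = L := by
  subst hlen
  refine ⟨fun i => ⟨L[(i : ℕ)] - 1, ?_⟩, List.ext_getElem (by simp) fun i _ _ => ?_⟩
  · have := hL _ (List.getElem_mem i.2)
    omega
  · have := hL _ (List.getElem_mem ‹i < L.length›)
    simp only [List.getElem_ofFn]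
    omega

theorem natCast_div_two_pow_eq_iff {n t X c : ℕ} (hn : 2 ≤ n) (hX : t + X = 2 ^ (n - 2)) :
    (c : ℝ) / 2 ^ n = (2 * (t : ℝ) - 1) / 2 ^ (n - 1) ↔ c + 4 * X + 2 = 2 ^ n := by
  obtain ⟨m, rfl⟩ : ∃ m, n = m + 2 := ⟨n - 2, by omega⟩
  simp only [Nat.add_sub_cancel, show m + 2 - 1 = m + 1 from rfl] at hX ⊢
  rw [show (2 * (t : ℝ) - 1) / 2 ^ (m + 1) = 2 * (2 * t - 1) / 2 ^ (m + 2) by ring,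
    div_left_inj' (by positivity), pow_add, ← hX,
    show c + 4 * X + 2 = (t + X) * 2 ^ 2 ↔ c + 2 = 4 * t by omega, ← Nat.cast_inj (R := ℝ)]
  push_cast
  constructor <;> intro h <;> linarith

/-- For each `1 ≤ t ≤ 2^(n-2)` there is exactly one `α ∈ {1,…,n}ⁿ` parking with
probability `(2t-1)/2^(n-1)` in the random 1-Naples model with `p = 1/2`. -/
theorem stmt11 (n : ℕ) (hn : 2 ≤ n) (t : ℕ) (ht1 : 1 ≤ t) (ht2 : t ≤ 2 ^ (n - 2)) :
    ∃! α : Fin n → Fin n,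
      probNaples n 1 (1/2) (fun i => (α i).1 + 1) = (2 * (t : ℝ) - 1) / 2 ^ (n - 1) := by
  obtain ⟨X, hX⟩ : ∃ X, t + X = 2 ^ (n - 2) := ⟨_, Nat.add_sub_of_le ht2⟩
  have hpow : 2 ^ n = 2 ^ (n - 2) * 2 ^ 2 := by rw [← pow_add, Nat.sub_add_cancel hn]
  have hX_lt : X < 2 ^ (n - 2) := by omega
  have key : ∀ α : Fin n → Fin n,
      probNaples n 1 (1/2) (fun i => (α i).1 + 1) = (2 * (t : ℝ) - 1) / 2 ^ (n - 1) ↔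
        List.ofFn (fun i => (α i).1 + 1) = bitStair n (2 * X) := fun α => by
    rw [probNaples_half, natCast_div_two_pow_eq_iff hn hX,
      parkCount_add_eq_two_pow_iff hn (by omega) List.length_ofFn (by simp [List.mem_ofFn])]
  obtain ⟨α, hα⟩ := exists_ofFn_fin_add_one_eq (length_bitStair n (2 * X)) fun a ha => by
    have hbounds := mem_bitStair_bounds ha
    rw [popcount_two_mul] at hbounds
    have := popcount_le hX_lt
    omega
  refine ⟨α, (key α).2 hα, fun β hβ => funext fun i => Fin.ext ?_⟩
  simpa using congrFun (List.ofFn_injective (((key β).1 hβ).trans hα.symm)) i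
end
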